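/- arXiv:2302.05484 — 4 statements merged into one kernel-verified Lean document; each statement's English description precedes it below -/
import Mathlib

section
/- Let f : [0,1] → [0,1] be continuous and let x₀ ∈ [0,1] be a recurrent point of f (i.e., x₀ is in the closure of its forward orbit {f^n(x₀) : n ≥ 1}). Then x₀ lies in the closure of the set of periodic points of f. -/
open Set

/-- Core lemma: if `x` is a non-periodic point of an interval map whose forward orbit
accumulates on `x` from the right, and there are no periodic points within `ε` of `x`,
then we get a contradiction. -/
lemma aux_core_recurrent (f : ℝ → ℝ) (hf : ContinuousOn f (Icc 0 1))
    (hmaps : MapsTo f (Icc 0 1) (Icc 0 1)) (x : ℝ) (hx : x ∈ Icc (0:ℝ) 1)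
    (ε : ℝ) (hε : 0 < ε)
    (hP : ∀ p ∈ Icc (0:ℝ) 1, ∀ k : ℕ, 1 ≤ k → f^[k] p = p → ε ≤ |x - p|)
    (hne : ∀ n : ℕ, 1 ≤ n → f^[n] x ≠ x)
    (hright : ∀ δ : ℝ, 0 < δ → ∃ n : ℕ, 1 ≤ n ∧ f^[n] x ∈ Ioo x (x + δ)) : False := by
  classical
  have hiter_mem : ∀ n : ℕ, f^[n] x ∈ Icc (0:ℝ) 1 := fun n => hmaps.iterate n hx
  have hiter_cont : ∀ n : ℕ, ContinuousOn f^[n] (Icc (0:ℝ) 1) := by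
    intro n
    induction n with
    | zero => simpa using continuousOn_id
    | succ n ih =>
      rw [Function.iterate_succ']
      exact hf.comp ih (hmaps.iterate n)
  obtain ⟨m, hm1, hmIoo⟩ := hright ε hε
  have hxu : x < f^[m] x := hmIoo.1
  have huε : f^[m] x < x + ε := hmIoo.2
  have hu01 : f^[m] x ∈ Icc (0:ℝ) 1 := hiter_mem m
  have hsub : Icc x (f^[m] x) ⊆ Icc (0:ℝ) 1 :=
    fun w hw => ⟨le_trans hx.1 hw.1, le_trans hw.2 hu01.2⟩
  -- no periodic points in [x, f^[m] x]
  have hnoper : ∀ p ∈ Icc x (f^[m] x), ∀ k : ℕ, 1 ≤ k → f^[k] p ≠ p := by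
    intro p hp k hk hfp
    have h1 : ε ≤ |x - p| := hP p (hsub hp) k hk hfp
    have h2 : |x - p| = p - x := by
      rw [abs_sub_comm]
      exact abs_of_nonneg (by linarith [hp.1])
    linarith [hp.2]
  -- sign lemma: if some point of [x, f^[m] x] is not pushed up by f^[n],
  -- then every point of [x, f^[m] x] is pushed strictly down.
  have hsign : ∀ n : ℕ, 1 ≤ n → ∀ a ∈ Icc x (f^[m] x), f^[n] a ≤ a →
      ∀ w ∈ Icc x (f^[m] x), f^[n] w < w := by
    intro n hn a ha hfa w hw
    by_contra hcon
    push_neg at hcon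
    have hxuIcc : uIcc x (f^[m] x) = Icc x (f^[m] x) := uIcc_of_le hxu.le
    have huIcc : uIcc a w ⊆ Icc x (f^[m] x) := by
      rw [← hxuIcc]
      exact uIcc_subset_uIcc (by rw [hxuIcc]; exact ha) (by rw [hxuIcc]; exact hw)
    have hch : ContinuousOn (fun s => f^[n] s - s) (uIcc a w) :=
      ((hiter_cont n).mono (fun s hs => hsub (huIcc hs))).sub continuousOn_id
    have h0 : (0:ℝ) ∈ uIcc (f^[n] a - a) (f^[n] w - w) := by
      rw [mem_uIcc]
      left
      constructor <;> linarith
    obtain ⟨p, hpmem, hp0⟩ := intermediate_value_uIcc hch h0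
    have hp0' : f^[n] p = p := by
      have : f^[n] p - p = 0 := hp0
      linarith
    exact hnoper p (huIcc hpmem) n hn hp0'
  -- a positive lower bound on distances of the first N orbit points to x
  have hdmin : ∀ N : ℕ, ∃ d : ℝ, 0 < d ∧ ∀ k : ℕ, 1 ≤ k → k ≤ N → d ≤ |f^[k] x - x| := by
    intro N
    induction N with
    | zero => exact ⟨1, one_pos, by omega⟩
    | succ N ih =>
      obtain ⟨d, hd, hdle⟩ := ih
      refine ⟨min d |f^[N+1] x - x|,
        lt_min hd (abs_pos.2 (sub_ne_zero.2 (hne (N+1) (by omega)))), ?_⟩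
      intro k hk1 hk2
      rcases Nat.lt_or_ge k (N+1) with h | h
      · exact le_trans (min_le_left _ _) (hdle k hk1 (by omega))
      · have hk : k = N + 1 := by omega
        subst hk
        exact min_le_right _ _
  -- we can always find a later return, closer to x
  have hnext : ∀ N : ℕ, ∀ c : ℝ, x < c → ∃ n : ℕ, N < n ∧ 1 ≤ n ∧ f^[n] x ∈ Ioo x c := by
    intro N c hc
    obtain ⟨d, hd, hdle⟩ := hdmin N
    obtain ⟨n, hn1, hnIoo⟩ := hright (min (c - x) d) (lt_min (by linarith) hd)
    refine ⟨n, ?_, hn1, hnIoo.1, ?_⟩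
    · by_contra hcon
      push_neg at hcon
      have h1 := hdle n hn1 hcon
      have h2 : |f^[n] x - x| = f^[n] x - x := abs_of_pos (by linarith [hnIoo.1])
      have h3 := hnIoo.2
      have h4 : (min (c - x) d) ≤ d := min_le_right _ _
      linarith
    · have h3 := hnIoo.2
      have h4 : (min (c - x) d) ≤ c - x := min_le_left _ _
      linarith
  choose F hFgt hF1 hFIoo using hnext
  -- a sequence of return times with strictly increasing times, strictly decreasing values
  obtain ⟨step, hstepgt, hstepval⟩ :
      ∃ step : {n : ℕ // 1 ≤ n ∧ x < f^[n] x ∧ f^[n] x ≤ f^[m] x} →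
               {n : ℕ // 1 ≤ n ∧ x < f^[n] x ∧ f^[n] x ≤ f^[m] x},
        (∀ a, a.1 < (step a).1) ∧ (∀ a, f^[(step a).1] x < f^[a.1] x) :=
    ⟨fun a => ⟨F a.1 (f^[a.1] x) a.2.2.1,
      hF1 a.1 (f^[a.1] x) a.2.2.1,
      (hFIoo a.1 (f^[a.1] x) a.2.2.1).1,
      le_trans (le_of_lt (hFIoo a.1 (f^[a.1] x) a.2.2.1).2) a.2.2.2⟩,
      fun a => hFgt a.1 (f^[a.1] x) a.2.2.1,
      fun a => (hFIoo a.1 (f^[a.1] x) a.2.2.1).2⟩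
  obtain ⟨t, ht0, htsucc⟩ :
      ∃ t : ℕ → {n : ℕ // 1 ≤ n ∧ x < f^[n] x ∧ f^[n] x ≤ f^[m] x},
        (t 0).1 = m ∧ ∀ k, t (k+1) = step (t k) :=
    ⟨fun k => Nat.rec ⟨m, hm1, hxu, le_rfl⟩ (fun _ a => step a) k, rfl, fun _ => rfl⟩
  have hmono : StrictMono fun k => (t k).1 :=
    strictMono_nat_of_lt_succ fun k => by rw [htsucc k]; exact hstepgt (t k)
  have hanti : StrictAnti fun k => f^[(t k).1] x :=
    strictAnti_nat_of_succ_lt fun k => by rw [htsucc k]; exact hstepval (t k)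
  -- core contradiction from two return times with equal residues mod m
  have hcore : ∀ i j : ℕ, i < j → (t i).1 % m = (t j).1 % m → False := by
    intro i j hlt hmod
    have hnij : (t i).1 < (t j).1 := hmono hlt
    have hval : f^[(t j).1] x < f^[(t i).1] x := hanti hlt
    have hdvd : m ∣ (t j).1 - (t i).1 := (Nat.modEq_iff_dvd' hnij.le).1 hmod
    obtain ⟨D, hD⟩ := hdvd
    have hD1 : 1 ≤ D := by
      rcases Nat.eq_zero_or_pos D with h | h
      · subst h; omega
      · exact h
    have hdip : f^[m*D] x < x := by
      have hmem : f^[(t i).1] x ∈ Icc x (f^[m] x) := ⟨le_of_lt (t i).2.2.1, (t i).2.2.2⟩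
      have hcalc : f^[m*D] (f^[(t i).1] x) = f^[(t j).1] x := by
        rw [← Function.iterate_add_apply]
        congr 1
        omega
      have hle : f^[m*D] (f^[(t i).1] x) ≤ f^[(t i).1] x := by
        rw [hcalc]; exact hval.le
      exact hsign (m*D) (Nat.one_le_iff_ne_zero.2 (Nat.mul_ne_zero (by omega) (by omega)))
        _ hmem hle x ⟨le_rfl, hxu.le⟩
    have hex : ∃ jj : ℕ, 1 ≤ jj ∧ f^[m*jj] x < x := ⟨D, hD1, hdip⟩
    have hspec := Nat.find_spec hex
    have hj₀1 : 1 ≤ Nat.find hex := hspec.1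
    have hj₀ne1 : Nat.find hex ≠ 1 := by
      intro h
      have h2 := hspec.2
      rw [h, mul_one] at h2
      linarith
    obtain ⟨n₀, hn₀⟩ : ∃ n₀ : ℕ, Nat.find hex = n₀ + 2 := ⟨Nat.find hex - 2, by omega⟩
    have hkey : f^[m*(Nat.find hex - 1)] (f^[m] x) = f^[m*(Nat.find hex)] x := by
      rw [← Function.iterate_add_apply]
      congr 1
      have e1 : Nat.find hex - 1 = n₀ + 1 := by omega
      rw [e1, hn₀]
      ring
    have hle : f^[m*(Nat.find hex - 1)] (f^[m] x) ≤ f^[m] x := by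
      rw [hkey]
      have := hspec.2
      linarith
    have hfire : f^[m*(Nat.find hex - 1)] x < x :=
      hsign (m*(Nat.find hex - 1))
        (Nat.one_le_iff_ne_zero.2 (Nat.mul_ne_zero (by omega) (by omega)))
        (f^[m] x) ⟨hxu.le, le_rfl⟩ hle x ⟨le_rfl, hxu.le⟩
    have hmin := Nat.find_min hex (show Nat.find hex - 1 < Nat.find hex by omega)
    exact hmin ⟨by omega, hfire⟩
  -- pigeonhole on residues mod m
  have hm0 : 0 < m := hm1
  obtain ⟨i, hi, j, hj, hij, hmod⟩ :=
    Finset.exists_ne_map_eq_of_card_lt_of_maps_to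
      (show (Finset.range m).card < (Finset.range (m+1)).card by simp)
      (fun k _ => Finset.mem_range.2 (Nat.mod_lt (t k).1 hm0))
  rcases hij.lt_or_gt with h | h
  · exact hcore i j h hmod
  · exact hcore j i h hmod.symm

/-- L.-S. Young: for interval maps, periodic points are dense in the recurrent set.
If `x₀ ∈ [0,1]` is recurrent for a continuous map `f : [0,1] → [0,1]`, then `x₀` lies in
the closure of the set of periodic points of `f`. -/
theorem recurrent_mem_closure_periodicPts
    (f : ℝ → ℝ) (hf : ContinuousOn f (Icc 0 1)) (hmaps : MapsTo f (Icc 0 1) (Icc 0 1))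
    (x₀ : ℝ) (hx₀ : x₀ ∈ Icc (0 : ℝ) 1)
    (hrec : x₀ ∈ closure {y : ℝ | ∃ n : ℕ, 1 ≤ n ∧ f^[n] x₀ = y}) :
    x₀ ∈ closure {p : ℝ | p ∈ Icc (0 : ℝ) 1 ∧ ∃ k : ℕ, 1 ≤ k ∧ f^[k] p = p} := by
  by_contra hcon
  rw [Metric.mem_closure_iff] at hcon
  push_neg at hcon
  obtain ⟨ε, hε, hεP⟩ := hcon
  -- x₀ is not periodic
  have hne : ∀ n : ℕ, 1 ≤ n → f^[n] x₀ ≠ x₀ := by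
    intro n hn h
    have hper : x₀ ∈ {p : ℝ | p ∈ Icc (0:ℝ) 1 ∧ ∃ k : ℕ, 1 ≤ k ∧ f^[k] p = p} :=
      ⟨hx₀, n, hn, h⟩
    have := hεP _ hper
    rw [dist_self] at this
    linarith
  -- the orbit accumulates on x₀
  have hacc : ∀ δ : ℝ, 0 < δ → ∃ n : ℕ, 1 ≤ n ∧ |f^[n] x₀ - x₀| < δ := by
    intro δ hδ
    rw [Metric.mem_closure_iff] at hrec
    obtain ⟨y, hy, hdist⟩ := hrec δ hδ
    obtain ⟨n, hn1, hny⟩ := hy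
    refine ⟨n, hn1, ?_⟩
    rw [hny]
    rw [Real.dist_eq] at hdist
    rw [abs_sub_comm]
    exact hdist
  -- the adapted hypothesis on absence of periodic points near x₀
  have hP : ∀ p ∈ Icc (0:ℝ) 1, ∀ k : ℕ, 1 ≤ k → f^[k] p = p → ε ≤ |x₀ - p| := by
    intro p hp k hk hfk
    have := hεP p ⟨hp, k, hk, hfk⟩
    rwa [Real.dist_eq] at this
  by_cases hR : ∀ δ : ℝ, 0 < δ → ∃ n : ℕ, 1 ≤ n ∧ f^[n] x₀ ∈ Ioo x₀ (x₀ + δ)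
  · exact aux_core_recurrent f hf hmaps x₀ hx₀ ε hε hP hne hR
  · -- the orbit accumulates on x₀ from the left: reflect and apply the core lemma
    push_neg at hR
    obtain ⟨δ₁, hδ₁, hδ₁P⟩ := hR
    have hL : ∀ δ : ℝ, 0 < δ → ∃ n : ℕ, 1 ≤ n ∧ f^[n] x₀ ∈ Ioo (x₀ - δ) x₀ := by
      intro δ hδ
      obtain ⟨n, hn1, hnlt⟩ := hacc (min δ δ₁) (lt_min hδ hδ₁)
      refine ⟨n, hn1, ?_⟩
      have hne' := hne n hn1
      have hnot := hδ₁P n hn1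
      rcases lt_trichotomy (f^[n] x₀) x₀ with h | h | h
      · constructor
        · have h1 : |f^[n] x₀ - x₀| = x₀ - f^[n] x₀ := by
            rw [abs_sub_comm]
            exact abs_of_pos (by linarith)
          have h2 : min δ δ₁ ≤ δ := min_le_left _ _
          linarith
        · exact h
      · exact absurd h hne'
      · exfalso
        apply hnot
        constructor
        · exact h
        · have h1 : |f^[n] x₀ - x₀| = f^[n] x₀ - x₀ := abs_of_pos (by linarith)
          have h2 : min δ δ₁ ≤ δ₁ := min_le_right _ _
          linarith
    -- the reflected map
    set g : ℝ → ℝ := fun s => 1 - f (1 - s) with hg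
    have hrmaps : MapsTo (fun s : ℝ => 1 - s) (Icc 0 1) (Icc 0 1) := by
      intro s hs
      simp only [mem_Icc] at hs ⊢
      constructor <;> linarith
    have hgc : ContinuousOn g (Icc 0 1) := by
      apply ContinuousOn.sub continuousOn_const
      exact hf.comp ((continuous_const.sub continuous_id).continuousOn) hrmaps
    have hgmaps : MapsTo g (Icc 0 1) (Icc 0 1) := by
      intro s hs
      have h1 : f (1 - s) ∈ Icc (0:ℝ) 1 := hmaps (hrmaps hs)
      simp only [mem_Icc] at h1 ⊢
      have h2 : g s = 1 - f (1 - s) := rfl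
      rw [h2]
      constructor <;> linarith
    have hgiter : ∀ (n : ℕ) (s : ℝ), g^[n] s = 1 - f^[n] (1 - s) := by
      intro n
      induction n with
      | zero => intro s; simp
      | succ n ih =>
        intro s
        rw [Function.iterate_succ_apply, Function.iterate_succ_apply, ih]
        congr 1
        have : g s = 1 - f (1 - s) := rfl
        rw [this]
        ring_nf
    have hx' : (1 - x₀) ∈ Icc (0:ℝ) 1 := hrmaps hx₀
    have hP' : ∀ p ∈ Icc (0:ℝ) 1, ∀ k : ℕ, 1 ≤ k → g^[k] p = p → ε ≤ |(1 - x₀) - p| := by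
      intro p hp k hk hgk
      rw [hgiter k p] at hgk
      have hq : f^[k] (1 - p) = 1 - p := by linarith
      have hqmem : (1 - p) ∈ Icc (0:ℝ) 1 := hrmaps hp
      have := hP (1 - p) hqmem k hk hq
      have habs : |x₀ - (1 - p)| = |(1 - x₀) - p| := by
        rw [abs_sub_comm]
        congr 1
        ring
      linarith [habs ▸ this]
    have hne' : ∀ n : ℕ, 1 ≤ n → g^[n] (1 - x₀) ≠ (1 - x₀) := by
      intro n hn h
      rw [hgiter n (1 - x₀)] at h
      have h1 : (1 : ℝ) - (1 - x₀) = x₀ := by ring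
      rw [h1] at h
      have : f^[n] x₀ = x₀ := by linarith
      exact hne n hn this
    have hright' : ∀ δ : ℝ, 0 < δ → ∃ n : ℕ, 1 ≤ n ∧ g^[n] (1 - x₀) ∈ Ioo (1 - x₀) ((1 - x₀) + δ) := by
      intro δ hδ
      obtain ⟨n, hn1, hnIoo⟩ := hL δ hδ
      refine ⟨n, hn1, ?_⟩
      rw [hgiter n (1 - x₀)]
      have h1 : (1 : ℝ) - (1 - x₀) = x₀ := by ring
      rw [h1]
      exact ⟨by linarith [hnIoo.2], by linarith [hnIoo.1]⟩
    exact aux_core_recurrent g hgc hgmaps (1 - x₀) hx' ε hε hP' hne' hright'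
end

section
/- Let f : [0,1] → [0,1] be continuous with disjoint nonempty closed intervals I₀, I₁ and ℓ ≥ 1 such that f^ℓ(I₀) ⊇ I₀ ∪ I₁ and f^ℓ(I₁) ⊇ I₀ ∪ I₁. Then for every finite word w ∈ {0,1}^n there is a point p ∈ [0,1] periodic for f^ℓ with period dividing n whose itinerary relative to (I₀,I₁) realizes w. -/
/-!
If a continuous `g` covers `[u, v]` by `[c, d]`, then some subinterval of `[c, d]` is mapped by
`g` exactly onto `[u, v]` (take the last preimage of one endpoint before the first preimage of
the other). Pulling the intervals `I_{w_i}` back one step at a time along the periodically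
extended word gives an interval `K ⊆ I_{w_0}` with `g^i(K) ⊆ I_{w_i}` for `i < n` and
`g^n(K) = I_{w_n} = I_{w_0} ⊇ K`, where `g = f^ℓ`; so `g^n` has a fixed point in `K`.
-/

open Set Function

section Covering

variable {g : ℝ → ℝ} {u v : ℝ}

theorem image_Icc_eq_Icc_of_endpoint_values_not_attained_inside {c d : ℝ}
    (hg : ContinuousOn g (Icc c d)) (hcd : c ≤ d) (hc : g c = u) (hd : g d = v) (huv : u ≤ v)
    (hu : ∀ t ∈ Ioc c d, g t ≠ u) (hv : ∀ t ∈ Ico c d, g t ≠ v) :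
    g '' Icc c d = Icc u v := by
  refine Subset.antisymm ?_ (hc ▸ hd ▸ intermediate_value_Icc hcd hg)
  rintro _ ⟨t, ht, rfl⟩
  constructor
  · by_contra! hlt
    have htc : c < t := lt_of_le_of_ne ht.1 (by rintro rfl; exact hlt.ne hc)
    obtain ⟨s, hs, hgs⟩ := intermediate_value_Icc ht.2 (hg.mono (Icc_subset_Icc_left ht.1))
      ⟨hlt.le, hd ▸ huv⟩
    exact hu s ⟨htc.trans_le hs.1, hs.2⟩ hgs
  · by_contra! hgt
    have htd : t < d := lt_of_le_of_ne ht.2 (by rintro rfl; exact hgt.ne' hd)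
    obtain ⟨s, hs, hgs⟩ := intermediate_value_Icc ht.1 (hg.mono (Icc_subset_Icc_right ht.2))
      ⟨hc ▸ huv, hgt.le⟩
    exact hv s ⟨hs.1, hs.2.trans_lt htd⟩ hgs

theorem exists_Icc_subset_image_eq_Icc_of_le {x y : ℝ} (hg : ContinuousOn g (Icc x y))
    (hxy : x ≤ y) (hx : g x = u) (hy : g y = v) (huv : u ≤ v) :
    ∃ c d, Icc c d ⊆ Icc x y ∧ g '' Icc c d = Icc u v := by
  set T := Icc x y ∩ g ⁻¹' {v}
  have hTbdd : BddBelow T := ⟨x, fun t ht => ht.1.1⟩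
  have hdT : sInf T ∈ T :=
    (hg.preimage_isClosed_of_isClosed isClosed_Icc isClosed_singleton).csInf_mem
      ⟨y, right_mem_Icc.2 hxy, hy⟩ hTbdd
  set d := sInf T
  set S := Icc x d ∩ g ⁻¹' {u}
  have hSbdd : BddAbove S := ⟨d, fun t ht => ht.1.2⟩
  have hcS : sSup S ∈ S :=
    ((hg.mono (Icc_subset_Icc_right hdT.1.2)).preimage_isClosed_of_isClosed isClosed_Icc
      isClosed_singleton).csSup_mem ⟨x, left_mem_Icc.2 hdT.1.1, hx⟩ hSbdd
  set c := sSup S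
  have hcd : Icc c d ⊆ Icc x y := Icc_subset_Icc hcS.1.1 hdT.1.2
  refine ⟨c, d, hcd, image_Icc_eq_Icc_of_endpoint_values_not_attained_inside (hg.mono hcd)
    hcS.1.2 hcS.2 hdT.2 huv (fun t ht hgt => ?_) (fun t ht hgt => ?_)⟩
  · exact ht.1.not_ge (le_csSup hSbdd ⟨⟨hcS.1.1.trans ht.1.le, ht.2⟩, hgt⟩)
  · exact ht.2.not_ge (csInf_le hTbdd ⟨⟨hcS.1.1.trans ht.1, ht.2.le.trans hdT.1.2⟩, hgt⟩)

theorem ContinuousOn.exists_Icc_subset_image_eq_Icc {c d : ℝ} (hg : ContinuousOn g (Icc c d))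
    (huv : u ≤ v) (hcov : Icc u v ⊆ g '' Icc c d) :
    ∃ c' d', Icc c' d' ⊆ Icc c d ∧ g '' Icc c' d' = Icc u v := by
  obtain ⟨x, hx, hgx⟩ := hcov (left_mem_Icc.2 huv)
  obtain ⟨y, hy, hgy⟩ := hcov (right_mem_Icc.2 huv)
  rcases le_total x y with hxy | hyx
  · have hxy' : Icc x y ⊆ Icc c d := Icc_subset_Icc hx.1 hy.2
    obtain ⟨c', d', hsub, himg⟩ :=
      exists_Icc_subset_image_eq_Icc_of_le (hg.mono hxy') hxy hgx hgy huv
    exact ⟨c', d', hsub.trans hxy', himg⟩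
  · -- `g` meets `v` to the left of `u`: reflect the domain.
    have hyx' : Icc y x ⊆ Icc c d := Icc_subset_Icc hy.1 hx.2
    have hneg : MapsTo Neg.neg (Icc (-x) (-y)) (Icc y x) :=
      fun t ht => ⟨by linarith [ht.2], by linarith [ht.1]⟩
    obtain ⟨c', d', hsub, himg⟩ := exists_Icc_subset_image_eq_Icc_of_le (g := g ∘ Neg.neg)
      ((hg.mono hyx').comp continuousOn_neg hneg) (neg_le_neg hyx) (by simpa) (by simpa) huv
    refine ⟨-d', -c', ?_, ?_⟩
    · rw [← image_neg_Icc]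
      exact (image_mono hsub).trans ((image_subset_iff.2 hneg).trans hyx')
    · rw [← image_neg_Icc, ← image_comp, himg]

end Covering

theorem exists_Icc_iterate_mapsTo_of_covering_chain {g : ℝ → ℝ} {s : Set ℝ}
    (hg : ContinuousOn g s) (hgs : MapsTo g s s) {a b : ℕ → ℝ} (hab : ∀ i, a i ≤ b i)
    (hs : ∀ i, Icc (a i) (b i) ⊆ s)
    (hcov : ∀ i, Icc (a (i + 1)) (b (i + 1)) ⊆ g '' Icc (a i) (b i)) (n : ℕ) :
    ∃ c d, Icc c d ⊆ Icc (a 0) (b 0) ∧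
      (∀ i ≤ n, MapsTo g^[i] (Icc c d) (Icc (a i) (b i))) ∧
      g^[n] '' Icc c d = Icc (a n) (b n) := by
  induction n with
  | zero =>
    refine ⟨a 0, b 0, subset_rfl, fun i hi => ?_, image_id _⟩
    obtain rfl := Nat.le_zero.1 hi
    exact mapsTo_id _
  | succ n ih =>
    obtain ⟨c, d, hsub, hmaps, himg⟩ := ih
    have hcov' : Icc (a (n + 1)) (b (n + 1)) ⊆ g^[n + 1] '' Icc c d := by
      rw [iterate_succ', image_comp, himg]
      exact hcov n
    obtain ⟨c', d', hsub', himg'⟩ := ((hg.iterate hgs (n + 1)).mono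
      (hsub.trans (hs 0))).exists_Icc_subset_image_eq_Icc (hab _) hcov'
    refine ⟨c', d', hsub'.trans hsub, fun i hi => ?_, himg'⟩
    rcases hi.lt_or_eq with hi | rfl
    · exact (hmaps i (Nat.lt_succ_iff.1 hi)).mono_left hsub'
    · exact himg' ▸ mapsTo_image _ _

theorem horseshoe_realizes_all_periodic_itineraries_general
    (f : ℝ → ℝ) (hf : ContinuousOn f (Icc 0 1)) (hmaps : MapsTo f (Icc 0 1) (Icc 0 1))
    (ℓ : ℕ) (a b : Fin 2 → ℝ)
    (hne : ∀ j, a j ≤ b j) (hsub : ∀ j, Icc (a j) (b j) ⊆ Icc (0 : ℝ) 1)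
    (hcover : ∀ j, Icc (a 0) (b 0) ∪ Icc (a 1) (b 1) ⊆ f^[ℓ] '' Icc (a j) (b j)) :
    ∀ n : ℕ, 1 ≤ n → ∀ w : Fin n → Fin 2,
      ∃ p ∈ Icc (0 : ℝ) 1,
        (∀ i : Fin n, f^[ℓ * i] p ∈ Icc (a (w i)) (b (w i))) ∧ f^[ℓ * n] p = p := by
  intro n hn w
  let W : ℕ → Fin 2 := fun k => w ⟨k % n, Nat.mod_lt k hn⟩
  have hg := hf.iterate hmaps ℓ
  have hgs := hmaps.iterate ℓ
  have hcovW (i : ℕ) :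
      Icc (a (W (i + 1))) (b (W (i + 1))) ⊆ f^[ℓ] '' Icc (a (W i)) (b (W i)) := by
    refine Subset.trans ?_ (hcover (W i))
    rcases Fin.exists_fin_two.1 ⟨W (i + 1), rfl⟩ with h | h <;> rw [h]
    exacts [subset_union_left, subset_union_right]
  obtain ⟨c, d, hK, hitin, himg⟩ := exists_Icc_iterate_mapsTo_of_covering_chain hg hgs
    (fun i => hne (W i)) (fun i => hsub (W i)) hcovW n
  have hWn : W n = W 0 := by simp [W]
  rw [hWn] at himg
  have hcd : c ≤ d := nonempty_Icc.1 ((himg ▸ nonempty_Icc.2 (hne _)).of_image)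
  obtain ⟨p, hp, hfix⟩ := exists_mem_Icc_isFixedPt_of_surjOn
    ((hg.iterate hgs n).mono (hK.trans (hsub _))) hcd (by rw [SurjOn, himg]; exact hK)
  refine ⟨p, hsub _ (hK hp), fun i => ?_, by rw [iterate_mul]; exact hfix⟩
  have hWi : W i = w i := by simp [W, Nat.mod_eq_of_lt i.isLt]
  simpa [hWi, iterate_mul] using hitin i i.isLt.le hp

/-- Misiurewicz horseshoe: under the covering hypotheses, every finite word `w ∈ {0,1}^n`
is realized by a point `p` which is periodic for `f^ℓ` with period dividing `n` and whose
itinerary relative to `(I₀, I₁)` is `w`. -/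
theorem horseshoe_realizes_all_periodic_itineraries
    (f : ℝ → ℝ) (hf : ContinuousOn f (Icc 0 1)) (hmaps : MapsTo f (Icc 0 1) (Icc 0 1))
    (ℓ : ℕ) (hℓ : 1 ≤ ℓ) (a b : Fin 2 → ℝ)
    (hne : ∀ j, a j ≤ b j) (hsub : ∀ j, Icc (a j) (b j) ⊆ Icc (0 : ℝ) 1)
    (hdisj : Disjoint (Icc (a 0) (b 0)) (Icc (a 1) (b 1)))
    (hcover : ∀ j, Icc (a 0) (b 0) ∪ Icc (a 1) (b 1) ⊆ f^[ℓ] '' Icc (a j) (b j)) :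
    ∀ n : ℕ, 1 ≤ n → ∀ w : Fin n → Fin 2,
      ∃ p ∈ Icc (0 : ℝ) 1,
        (∀ i : Fin n, f^[ℓ * i] p ∈ Icc (a (w i)) (b (w i))) ∧ f^[ℓ * n] p = p :=
  horseshoe_realizes_all_periodic_itineraries_general f hf hmaps ℓ a b hne hsub hcover
end

section
/- Let f : [0,1] → [0,1] be a unimodal map with turning point c (f strictly increasing on [0,c], strictly decreasing on [c,1]) and suppose f(c) ≤ c. Then for every x ∈ [0,1], the sequence f^n(x) converges to a fixed point of f. -/
open Set Filter

lemma aux_mono_orbit (f : ℝ → ℝ) (c : ℝ)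
    (hmapc : MapsTo f (Icc 0 c) (Icc 0 c)) (hm : MonotoneOn f (Icc 0 c))
    (hcont : ContinuousOn f (Icc 0 c)) (y : ℝ) (hy : y ∈ Icc 0 c) :
    ∃ p ∈ Icc (0:ℝ) c, f p = p ∧ Tendsto (fun n => f^[n] y) atTop (nhds p) := by
  set a : ℕ → ℝ := fun n => f^[n] y with ha_def
  have ha : ∀ n, a n ∈ Icc (0:ℝ) c := by
    intro n
    induction n with
    | zero => exact hy
    | succ n ih =>
      have : a (n+1) = f (a n) := Function.iterate_succ_apply' f n y
      rw [this]; exact hmapc ih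
  have hsucc : ∀ n, a (n+1) = f (a n) := fun n => Function.iterate_succ_apply' f n y
  have key : ∀ p : ℝ, p ∈ Icc (0:ℝ) c → Tendsto a atTop (nhds p) →
      ∃ q ∈ Icc (0:ℝ) c, f q = q ∧ Tendsto a atTop (nhds q) := by
    intro p hp hap
    refine ⟨p, hp, ?_, hap⟩
    have h1 : Tendsto (fun n => f (a n)) atTop (nhds (f p)) := by
      have := (hcont p hp).tendsto
      refine this.comp ?_
      rw [tendsto_nhdsWithin_iff]
      exact ⟨hap, Eventually.of_forall ha⟩
    have h2 : Tendsto (fun n => a (n+1)) atTop (nhds p) :=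
      hap.comp (tendsto_add_atTop_nat 1)
    have : Tendsto (fun n => f (a n)) atTop (nhds p) := by
      simpa only [hsucc] using h2
    exact tendsto_nhds_unique h1 this
  rcases le_total y (f y) with h | h
  · -- monotone increasing orbit
    have hstep : ∀ n, a n ≤ a (n+1) := by
      intro n
      induction n with
      | zero => simpa [ha_def, hsucc 0] using h
      | succ n ih =>
        calc a (n+1) = f (a n) := hsucc _
          _ ≤ f (a (n+1)) := hm (ha n) (ha (n+1)) ih
          _ = a (n+2) := (hsucc (n+1)).symm
    have hmon : Monotone a := monotone_nat_of_le_succ hstep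
    have hbdd : BddAbove (Set.range a) := ⟨c, by rintro _ ⟨n, rfl⟩; exact (ha n).2⟩
    have hten := tendsto_atTop_ciSup hmon hbdd
    have hp : (⨆ n, a n) ∈ Icc (0:ℝ) c :=
      isClosed_Icc.mem_of_tendsto hten (Eventually.of_forall ha)
    exact key _ hp hten
  · have hstep : ∀ n, a (n+1) ≤ a n := by
      intro n
      induction n with
      | zero => simpa [ha_def, hsucc 0] using h
      | succ n ih =>
        calc a (n+2) = f (a (n+1)) := hsucc _
          _ ≤ f (a n) := hm (ha (n+1)) (ha n) ih
          _ = a (n+1) := (hsucc n).symm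
    have hmon : Antitone a := antitone_nat_of_succ_le hstep
    have hbdd : BddBelow (Set.range a) := ⟨0, by rintro _ ⟨n, rfl⟩; exact (ha n).1⟩
    have hten := tendsto_atTop_ciInf hmon hbdd
    have hp : (⨅ n, a n) ∈ Icc (0:ℝ) c :=
      isClosed_Icc.mem_of_tendsto hten (Eventually.of_forall ha)
    exact key _ hp hten

/-- For a unimodal map `f : [0,1] → [0,1]` with turning point `c` satisfying `f(c) ≤ c`,
every forward orbit converges to a fixed point of `f`. -/
theorem unimodal_orbit_tendsto_fixedPoint_of_le
    (f : ℝ → ℝ) (hf : ContinuousOn f (Icc 0 1)) (hmaps : MapsTo f (Icc 0 1) (Icc 0 1))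
    (c : ℝ) (hc : c ∈ Ioo (0 : ℝ) 1)
    (hmono : StrictMonoOn f (Icc 0 c)) (hanti : StrictAntiOn f (Icc c 1))
    (hfc : f c ≤ c) :
    ∀ x ∈ Icc (0 : ℝ) 1, ∃ p ∈ Icc (0 : ℝ) 1, f p = p ∧
      Tendsto (fun n => f^[n] x) atTop (nhds p) := by
  intro x hx
  have hc0 : (0:ℝ) ≤ c := hc.1.le
  have hc1 : c ≤ 1 := hc.2.le
  have hsub : Icc (0:ℝ) c ⊆ Icc 0 1 := Icc_subset_Icc le_rfl hc1
  have hle : ∀ z ∈ Icc (0:ℝ) 1, f z ≤ c := by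
    intro z hz
    rcases le_total z c with h | h
    · exact le_trans (hmono.monotoneOn ⟨hz.1, h⟩ ⟨hc0, le_rfl⟩ h) hfc
    · exact le_trans (hanti.antitoneOn ⟨le_rfl, hc1⟩ ⟨h, hz.2⟩ h) hfc
  have hmapc : MapsTo f (Icc 0 c) (Icc 0 c) := by
    intro z hz
    exact ⟨(hmaps (hsub hz)).1, hle z (hsub hz)⟩
  have hy : f x ∈ Icc (0:ℝ) c := ⟨(hmaps hx).1, hle x hx⟩
  obtain ⟨p, hp, hfp, hten⟩ := aux_mono_orbit f c hmapc hmono.monotoneOn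
    (hf.mono hsub) (f x) hy
  refine ⟨p, hsub hp, hfp, ?_⟩
  have h1 : Tendsto (fun n => f^[n+1] x) atTop (nhds p) := by
    simpa [Function.iterate_succ_apply] using hten
  exact (tendsto_add_atTop_iff_nat 1).mp h1
end

section
/- Let f : X → X be a homeomorphism of a compact metric space. If f admits a renormalization domain of period τ for every τ in an infinite set of integers tending to infinity, and these domains are nested (D_{k+1} ⊆ D_k with periods τ_k | τ_{k+1}, τ_k → ∞), then the intersection K = ⋂_k ⋃_{i<τ_k} f^i(D_k) is a nonempty closed invariant set containing no periodic point of f. -/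
/-!
The set `⋃_{i < τ} f^i(D)` swept out by a renormalization domain `D` of period `τ` is compact,
nonempty and `f`-invariant, and it shrinks when `D` is replaced by a subdomain, because every
iterate `f^i(D')` with `D' ⊆ D` falls into `f^(i mod τ)(D)`. Hence, by Cantor's intersection
theorem, the limit set `K` is a nonempty compact invariant set. A point `p ∈ K` with `f^n p = p`
would lie in the cycle of some `D_k` with `τ_k > n`; moving it forward into `D_k` gives a point of
`f^n(D_k) ∩ D_k`, which is empty.
-/

open Set Function

namespace Renormalization

variable {X : Type*} (f : X → X)

def orbitUnion (D : Set X) (n : ℕ) : Set X :=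
  ⋃ i ∈ Finset.range n, f^[i] '' D

variable {f}

theorem mem_orbitUnion {D : Set X} {n : ℕ} {z : X} :
    z ∈ orbitUnion f D n ↔ ∃ i < n, z ∈ f^[i] '' D := by
  simp only [orbitUnion, mem_iUnion, Finset.mem_range, exists_prop]

theorem orbitUnion_nonempty {D : Set X} {n : ℕ} (hD : D.Nonempty) (hn : 0 < n) :
    (orbitUnion f D n).Nonempty :=
  let ⟨x, hx⟩ := hD
  ⟨x, mem_orbitUnion.2 ⟨0, hn, x, hx, rfl⟩⟩

theorem IsCompact.orbitUnion [TopologicalSpace X] (hf : Continuous f) {D : Set X}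
    (hD : IsCompact D) (n : ℕ) : IsCompact (orbitUnion f D n) :=
  (Finset.finite_toSet _).isCompact_biUnion fun i _ => hD.image (hf.iterate i)

theorem orbitUnion_subset_of_subset {D D' : Set X} {τ : ℕ} (hτ : 0 < τ)
    (hret : MapsTo f^[τ] D D) (hD' : D' ⊆ D) (m : ℕ) :
    orbitUnion f D' m ⊆ orbitUnion f D τ := by
  intro z hz
  obtain ⟨i, -, x, hx, rfl⟩ := mem_orbitUnion.1 hz
  refine mem_orbitUnion.2 ⟨i % τ, Nat.mod_lt _ hτ, f^[τ * (i / τ)] x, ?_, ?_⟩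
  · rw [iterate_mul]
    exact hret.iterate _ (hD' hx)
  · rw [← iterate_add_apply, Nat.mod_add_div]

theorem mapsTo_orbitUnion {D : Set X} {τ : ℕ} (hret : MapsTo f^[τ] D D) :
    MapsTo f (orbitUnion f D τ) (orbitUnion f D τ) := by
  intro z hz
  obtain ⟨i, hi, x, hx, rfl⟩ := mem_orbitUnion.1 hz
  rw [← iterate_succ_apply' f i]
  rcases (Nat.succ_le_of_lt hi).lt_or_eq with hlt | heq
  · exact mem_orbitUnion.2 ⟨i + 1, hlt, x, hx, rfl⟩
  · rw [heq]
    exact mem_orbitUnion.2 ⟨0, Nat.zero_lt_of_lt hi, _, hret hx, rfl⟩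

theorem iterate_ne_self_of_mem_orbitUnion {D : Set X} {τ n : ℕ} {p : X}
    (hret : MapsTo f^[τ] D D) (hdisj : f^[n] '' D ∩ D = ∅) (hp : p ∈ orbitUnion f D τ) :
    f^[n] p ≠ p := by
  intro hper
  obtain ⟨i, hi, x, hx, rfl⟩ := mem_orbitUnion.1 hp
  -- `y = f^(τ - i) p = f^τ x` lies in `D`, and it is fixed by `f^n` along with `p`.
  have hyD : f^[τ - i] (f^[i] x) ∈ D := by
    rw [← iterate_add_apply, Nat.sub_add_cancel hi.le]
    exact hret hx
  have hy : f^[n] (f^[τ - i] (f^[i] x)) = f^[τ - i] (f^[i] x) := by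
    rw [← iterate_add_apply, Nat.add_comm, iterate_add_apply, hper]
  exact (eq_empty_iff_forall_notMem.1 hdisj) _ ⟨⟨_, hyD, hy⟩, hyD⟩

end Renormalization

open Renormalization

theorem infinitely_renormalizable_limit_set_general
    {X : Type*} [MetricSpace X] [CompactSpace X]
    (f : X ≃ₜ X) (D : ℕ → Set X) (τ : ℕ → ℕ)
    (hclosed : ∀ k, IsClosed (D k)) (hne : ∀ k, (D k).Nonempty)
    (hτ1 : ∀ k, 1 ≤ τ k)
    (hdisj : ∀ k, ∀ i : ℕ, 1 ≤ i → i < τ k → ((⇑f)^[i] '' D k) ∩ D k = ∅)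
    (hret : ∀ k, (⇑f)^[τ k] '' D k ⊆ D k)
    (hnested : ∀ k, D (k + 1) ⊆ D k)
    (htend : Filter.Tendsto τ Filter.atTop Filter.atTop) :
    let K := ⋂ k, ⋃ i ∈ Finset.range (τ k), (⇑f)^[i] '' D k
    K.Nonempty ∧ IsClosed K ∧ (⇑f) '' K ⊆ K ∧
      ∀ p ∈ K, ∀ n : ℕ, 1 ≤ n → (⇑f)^[n] p ≠ p := by
  intro K
  have hK : K = ⋂ k, orbitUnion f (D k) (τ k) := rfl
  clear_value K
  subst hK
  have hmaps k : MapsTo f^[τ k] (D k) (D k) := mapsTo_iff_image_subset.2 (hret k)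
  have hcompact k : IsCompact (orbitUnion f (D k) (τ k)) :=
    (hclosed k).isCompact.orbitUnion f.continuous _
  refine ⟨?_, isClosed_iInter fun k => (hcompact k).isClosed, ?_, ?_⟩
  · exact IsCompact.nonempty_iInter_of_sequence_nonempty_isCompact_isClosed _
      (fun k => orbitUnion_subset_of_subset (hτ1 k) (hmaps k) (hnested k) _)
      (fun k => orbitUnion_nonempty (hne k) (hτ1 k)) (hcompact 0) fun k => (hcompact k).isClosed
  · exact (mapsTo_iInter_iInter fun k => mapsTo_orbitUnion (hmaps k)).image_subset
  · intro p hp n hn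
    obtain ⟨k, hk⟩ := (htend.eventually (Filter.eventually_gt_atTop n)).exists
    exact iterate_ne_self_of_mem_orbitUnion (hmaps k) (hdisj k n hn hk) (mem_iInter.1 hp k)

/-- An infinitely renormalizable structure for a homeomorphism `f` of a compact metric space:
nested closed nonempty renormalization domains `D k` of periods `τ k`, with `τ k ∣ τ (k+1)` and
`τ k → ∞`. Then `K = ⋂ k, ⋃_{i < τ k} f^i(D k)` is a nonempty closed invariant set containing
no periodic point of `f`. -/
theorem infinitely_renormalizable_limit_set
    {X : Type*} [MetricSpace X] [CompactSpace X]
    (f : X ≃ₜ X) (D : ℕ → Set X) (τ : ℕ → ℕ)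
    (hclosed : ∀ k, IsClosed (D k)) (hne : ∀ k, (D k).Nonempty)
    (hτ1 : ∀ k, 1 ≤ τ k)
    (hdisj : ∀ k, ∀ i : ℕ, 1 ≤ i → i < τ k → ((⇑f)^[i] '' D k) ∩ D k = ∅)
    (hret : ∀ k, (⇑f)^[τ k] '' D k ⊆ D k)
    (hnested : ∀ k, D (k + 1) ⊆ D k) (hdvd : ∀ k, τ k ∣ τ (k + 1))
    (htend : Filter.Tendsto τ Filter.atTop Filter.atTop) :
    let K := ⋂ k, ⋃ i ∈ Finset.range (τ k), (⇑f)^[i] '' D k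
    K.Nonempty ∧ IsClosed K ∧ (⇑f) '' K ⊆ K ∧
      ∀ p ∈ K, ∀ n : ℕ, 1 ≤ n → (⇑f)^[n] p ≠ p :=
  infinitely_renormalizable_limit_set_general f D τ hclosed hne hτ1 hdisj hret hnested htend
end
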